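/- For every VA automaton A there exists a deterministic VA automaton A^det such that ⟦A⟧_d = ⟦A^det⟧_d for every document d, obtained by the subset construction on the alphabet Σ ∪ {⊢x, ⊣x : x ∈ V}. -/

import Mathlib

/-- A mapping: a partial function from variables to spans (pairs of naturals). -/
abbrev Mapping (V : Type) : Type := V → Option (ℕ × ℕ)

/-- Transition labels of a variable-set automaton: a letter, ε, or opening/closing a
variable. -/
inductive VLabel (σ V : Type) : Type
  | ltr (a : σ) : VLabel σ V
  | eps : VLabel σ V
  | vopen (x : V) : VLabel σ V
  | vclose (x : V) : VLabel σ V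
deriving DecidableEq

/-- A variable-set automaton `(Q, q0, qf, δ)`. -/
structure VA (σ V Q : Type) where
  init : Q
  final : Q
  delta : Set (Q × VLabel σ V × Q)

/-- A transition. -/
abbrev Tr (σ V Q : Type) : Type := Q × VLabel σ V × Q

/-- A list of transitions forms a chain starting at state `q`. -/
def ChainFrom {σ V Q : Type} (q : Q) (trs : List (Tr σ V Q)) : Prop :=
  (∀ t ∈ trs.head?, t.1 = q) ∧
  ∀ (i : ℕ) (h : i + 1 < trs.length),
    (trs[i]'(Nat.lt_of_succ_lt h)).2.2 = (trs[i + 1]'h).1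

/-- The end state of a chain of transitions starting at `q`. -/
def endState {σ V Q : Type} (q : Q) (trs : List (Tr σ V Q)) : Q :=
  match trs.getLast? with
  | none => q
  | some t => t.2.2

/-- The word spelled by the letter transitions of a run. -/
def word {σ V Q : Type} (trs : List (Tr σ V Q)) : List σ :=
  trs.filterMap (fun t => match t.2.1 with | VLabel.ltr a => some a | _ => none)

/-- The number of `⊢x` transitions in a list of transitions. -/
def openCount {σ V Q : Type} [DecidableEq σ] [DecidableEq V] (x : V)
    (trs : List (Tr σ V Q)) : ℕ :=
  trs.countP (fun t => t.2.1 = VLabel.vopen x)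

/-- The number of `⊣x` transitions in a list of transitions. -/
def closeCount {σ V Q : Type} [DecidableEq σ] [DecidableEq V] (x : V)
    (trs : List (Tr σ V Q)) : ℕ :=
  trs.countP (fun t => t.2.1 = VLabel.vclose x)

/-- Variables are used correctly in a run: each variable is opened at most once, closed at
most once, and closed only after being opened. -/
def ValidVars {σ V Q : Type} [DecidableEq σ] [DecidableEq V]
    (trs : List (Tr σ V Q)) : Prop :=
  ∀ x : V, openCount x trs ≤ 1 ∧ closeCount x trs ≤ 1 ∧
    ∀ p : List (Tr σ V Q), p <+: trs → closeCount x p ≤ openCount x p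

/-- `trs` is an accepting run of `A` over the document `d`. -/
def AccRun {σ V Q : Type} [DecidableEq σ] [DecidableEq V] (A : VA σ V Q) (d : List σ)
    (trs : List (Tr σ V Q)) : Prop :=
  (∀ t ∈ trs, t ∈ A.delta) ∧ ChainFrom A.init trs ∧ endState A.init trs = A.final ∧
  word trs = d ∧ ValidVars trs

/-- The document position just before the `i`-th transition of a run:
one plus the number of preceding letter transitions. -/
def posAt {σ V Q : Type} (trs : List (Tr σ V Q)) (i : ℕ) : ℕ :=
  1 + (word (trs.take i)).length

/-- The mapping induced by a run: `x` is sent to the span between its opening and its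
closing transition, and is undefined if `x` is not both opened and closed. -/
def runMapping {σ V Q : Type} [DecidableEq σ] [DecidableEq V]
    (trs : List (Tr σ V Q)) : Mapping V :=
  fun x =>
    match trs.findIdx? (fun t => t.2.1 = VLabel.vopen x),
          trs.findIdx? (fun t => t.2.1 = VLabel.vclose x) with
    | some i, some j => some (posAt trs i, posAt trs j)
    | _, _ => none

/-- The semantics `⟦A⟧_d` of a VA `A` over a document `d`: the set of mappings of
accepting runs of `A` over `d`. -/
def semVA {σ V Q : Type} [DecidableEq σ] [DecidableEq V] (A : VA σ V Q) (d : List σ) :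
    Set (Mapping V) :=
  {μ | ∃ trs, AccRun A d trs ∧ μ = runMapping trs}

/-- A variable-set automaton with a set of final states (as used in the subset
construction). -/
structure VAF (σ V Q : Type) where
  init : Q
  finals : Set Q
  delta : Set (Q × VLabel σ V × Q)

/-- `trs` is an accepting run of the set-final VA `B` over the document `d`. -/
def AccRunF {σ V Q : Type} [DecidableEq σ] [DecidableEq V] (B : VAF σ V Q) (d : List σ)
    (trs : List (Tr σ V Q)) : Prop :=
  (∀ t ∈ trs, t ∈ B.delta) ∧ ChainFrom B.init trs ∧ endState B.init trs ∈ B.finals ∧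
  word trs = d ∧ ValidVars trs

/-- The semantics of a set-final VA. -/
def semVAF {σ V Q : Type} [DecidableEq σ] [DecidableEq V] (B : VAF σ V Q) (d : List σ) :
    Set (Mapping V) :=
  {μ | ∃ trs, AccRunF B d trs ∧ μ = runMapping trs}

/-- A set-final VA is deterministic: it has no ε-transitions and the transition relation
is a partial function on `Σ ∪ {⊢x, ⊣x : x ∈ V}`. -/
def DeterministicVAF {σ V Q : Type} (B : VAF σ V Q) : Prop :=
  (∀ p q : Q, (p, VLabel.eps, q) ∉ B.delta) ∧
  ∀ (p : Q) (l : VLabel σ V) (q q' : Q),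
    (p, l, q) ∈ B.delta → (p, l, q') ∈ B.delta → q = q'

/-!
A run's word, its mapping and the validity of its variable operations depend only on its
sequence of non-ε labels. After reading such a sequence `L` from the ε-closure of `q0`, the
subset construction sits in the set of states that `A` reaches by runs whose non-ε labels are
exactly `L`. Accepting runs of `A` and of its determinization therefore correspond label for
label, and induce the same mappings.
-/

namespace VLabel

variable {σ V : Type}

def letter? : VLabel σ V → Option σ
  | ltr a => some a
  | _ => none

def isEps : VLabel σ V → Bool
  | eps => true
  | _ => false

end VLabel

namespace VA

variable {σ V Q : Type}

inductive IsPath : Q → List (Tr σ V Q) → Q → Prop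
  | nil (q : Q) : IsPath q [] q
  | cons {q q' r : Q} {l : VLabel σ V} {trs : List (Tr σ V Q)} :
      IsPath q' trs r → IsPath q ((q, l, q') :: trs) r

theorem chainFrom_iff_isChain (q : Q) (trs : List (Tr σ V Q)) :
    ChainFrom q trs ↔
      (∀ t ∈ trs.head?, t.1 = q) ∧ trs.IsChain (fun t t' => t.2.2 = t'.1) := by
  rw [ChainFrom, List.isChain_iff_getElem]

theorem chainFrom_cons_iff (q : Q) (t : Tr σ V Q) (trs : List (Tr σ V Q)) :
    ChainFrom q (t :: trs) ↔ t.1 = q ∧ ChainFrom t.2.2 trs := by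
  simp only [chainFrom_iff_isChain, List.isChain_cons, List.head?_cons, Option.mem_def,
    Option.some.injEq, forall_eq']
  grind

theorem endState_cons (q : Q) (t : Tr σ V Q) (trs : List (Tr σ V Q)) :
    endState q (t :: trs) = endState t.2.2 trs := by
  cases trs with
  | nil => rfl
  | cons t' trs =>
    simp [endState, List.getLast?_eq_some_getLast]

theorem isPath_iff {q r : Q} {trs : List (Tr σ V Q)} :
    IsPath q trs r ↔ ChainFrom q trs ∧ endState q trs = r := by
  induction trs generalizing q with
  | nil =>
    simp only [chainFrom_iff_isChain, endState, List.head?_nil, List.getLast?_nil,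
      List.isChain_nil]
    constructor
    · rintro ⟨⟩
      simp
    · rintro ⟨-, rfl⟩
      exact .nil q
  | cons t trs ih =>
    obtain ⟨p, l, q'⟩ := t
    rw [chainFrom_cons_iff, endState_cons, and_assoc, ← ih]
    constructor
    · rintro ⟨⟩
      exact ⟨rfl, by assumption⟩
    · rintro ⟨rfl, h⟩
      exact .cons h

theorem IsPath.append {q r s : Q} {trs trs' : List (Tr σ V Q)}
    (h : IsPath q trs r) (h' : IsPath r trs' s) : IsPath q (trs ++ trs') s := by
  induction h with
  | nil => exact h'
  | cons _ ih => exact .cons (ih h')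

def labels (trs : List (Tr σ V Q)) : List (VLabel σ V) := trs.map (·.2.1)

def letters (L : List (VLabel σ V)) : List σ := L.filterMap VLabel.letter?

def eraseEps (L : List (VLabel σ V)) : List (VLabel σ V) := L.filter (!·.isEps)

theorem labels_append (trs trs' : List (Tr σ V Q)) :
    labels (trs ++ trs') = labels trs ++ labels trs' :=
  List.map_append

theorem eraseEps_append (L L' : List (VLabel σ V)) :
    eraseEps (L ++ L') = eraseEps L ++ eraseEps L' :=
  List.filter_append _ _

theorem eraseEps_eraseEps (L : List (VLabel σ V)) : eraseEps (eraseEps L) = eraseEps L := by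
  simp [eraseEps, List.filter_filter]

theorem isEps_of_mem_eraseEps {l : VLabel σ V} {L : List (VLabel σ V)} (h : l ∈ eraseEps L) :
    l.isEps = false := by
  simpa [eraseEps] using (List.mem_filter.1 h).2

theorem letters_cons (l : VLabel σ V) (L : List (VLabel σ V)) :
    letters (l :: L) = letters [l] ++ letters L := by
  cases l <;> rfl

theorem eraseEps_cons (l : VLabel σ V) (L : List (VLabel σ V)) :
    eraseEps (l :: L) = if l.isEps then eraseEps L else l :: eraseEps L := by
  cases l <;> rfl

theorem letters_eps : letters [(VLabel.eps : VLabel σ V)] = [] := rfl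

theorem word_eq_letters_labels (trs : List (Tr σ V Q)) : word trs = letters (labels trs) := by
  rw [word, letters, labels, List.filterMap_map]
  rfl

theorem letters_eraseEps (L : List (VLabel σ V)) : letters (eraseEps L) = letters L := by
  rw [letters, eraseEps, List.filterMap_filter]
  congr 1
  funext l
  cases l <;> rfl

theorem word_eq_letters (trs : List (Tr σ V Q)) :
    word trs = letters (eraseEps (labels trs)) := by
  rw [letters_eraseEps, word_eq_letters_labels]

theorem count_eraseEps [DecidableEq σ] [DecidableEq V] {l : VLabel σ V} (hl : l.isEps = false)
    (L : List (VLabel σ V)) : (eraseEps L).count l = L.count l :=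
  List.count_filter (by simp [hl])

theorem openCount_eq_count [DecidableEq σ] [DecidableEq V] (x : V) (trs : List (Tr σ V Q)) :
    openCount x trs = (eraseEps (labels trs)).count (.vopen x) := by
  rw [count_eraseEps rfl, labels, List.count_eq_countP, List.countP_map]
  rfl

theorem closeCount_eq_count [DecidableEq σ] [DecidableEq V] (x : V) (trs : List (Tr σ V Q)) :
    closeCount x trs = (eraseEps (labels trs)).count (.vclose x) := by
  rw [count_eraseEps rfl, labels, List.count_eq_countP, List.countP_map]
  rfl

def LabelsValid [DecidableEq σ] [DecidableEq V] (L : List (VLabel σ V)) : Prop :=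
  ∀ x : V, L.count (.vopen x) ≤ 1 ∧ L.count (.vclose x) ≤ 1 ∧
    ∀ p, p <+: L → p.count (.vclose x) ≤ p.count (.vopen x)

theorem validVars_iff_labelsValid [DecidableEq σ] [DecidableEq V] (trs : List (Tr σ V Q)) :
    ValidVars trs ↔ LabelsValid (eraseEps (labels trs)) := by
  simp only [ValidVars, LabelsValid, openCount_eq_count, closeCount_eq_count, eraseEps, labels,
    List.prefix_filter_iff, List.prefix_map_iff]
  grind

def firstPos (p : VLabel σ V → Bool) (L : List (VLabel σ V)) : Option ℕ :=
  (L.findIdx? p).map fun i => 1 + (letters (L.take i)).length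

theorem firstPos_cons (p : VLabel σ V → Bool) (l : VLabel σ V) (L : List (VLabel σ V)) :
    firstPos p (l :: L) =
      if p l then some 1 else (firstPos p L).map ((letters [l]).length + ·) := by
  simp only [firstPos, List.findIdx?_cons]
  split_ifs
  · rfl
  · simp only [Option.map_map]
    congr 1
    funext i
    simp only [Function.comp, List.take_succ_cons, letters_cons (L := List.take i L),
      List.length_append]
    omega

theorem firstPos_eraseEps {p : VLabel σ V → Bool} (hp : p .eps = false)
    (L : List (VLabel σ V)) :
    firstPos p (eraseEps L) = firstPos p L := by
  induction L with
  | nil => rfl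
  | cons l L ih =>
    cases l <;> simp [eraseEps_cons, VLabel.isEps, firstPos_cons, hp, ih, letters_eps]

def labelMapping [DecidableEq σ] [DecidableEq V] (L : List (VLabel σ V)) : Mapping V :=
  fun x => Option.map₂ Prod.mk (firstPos (· = .vopen x) L) (firstPos (· = .vclose x) L)

theorem runMapping_eq_labelMapping [DecidableEq σ] [DecidableEq V] (trs : List (Tr σ V Q)) :
    runMapping trs = labelMapping (eraseEps (labels trs)) := by
  funext x
  rw [labelMapping, firstPos_eraseEps (p := fun l : VLabel σ V => decide (l = .vopen x)) rfl,
    firstPos_eraseEps (p := fun l : VLabel σ V => decide (l = .vclose x)) rfl]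
  simp only [runMapping, firstPos, labels, List.findIdx?_map, posAt, word_eq_letters_labels,
    List.map_take, Function.comp_def]
  cases trs.findIdx? (fun t => decide (t.2.1 = VLabel.vopen x)) <;>
    cases trs.findIdx? (fun t => decide (t.2.1 = VLabel.vclose x)) <;> rfl

section Congr

variable {Q' : Type} {trs : List (Tr σ V Q)} {trs' : List (Tr σ V Q')}

theorem word_congr (h : eraseEps (labels trs) = eraseEps (labels trs')) :
    word trs = word trs' := by
  rw [word_eq_letters, h, word_eq_letters]

theorem runMapping_congr [DecidableEq σ] [DecidableEq V]
    (h : eraseEps (labels trs) = eraseEps (labels trs')) :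
    runMapping trs = runMapping trs' := by
  rw [runMapping_eq_labelMapping, h, runMapping_eq_labelMapping]

theorem validVars_congr [DecidableEq σ] [DecidableEq V]
    (h : eraseEps (labels trs) = eraseEps (labels trs')) :
    ValidVars trs ↔ ValidVars trs' := by
  rw [validVars_iff_labelsValid, h, validVars_iff_labelsValid]

end Congr

def EpsStep (A : VA σ V Q) (p q : Q) : Prop := (p, .eps, q) ∈ A.delta

def epsClosure (A : VA σ V Q) (S : Set Q) : Set Q :=
  {q | ∃ p ∈ S, Relation.ReflTransGen A.EpsStep p q}

def IsEpsClosed (A : VA σ V Q) (P : Set Q) : Prop :=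
  ∀ p ∈ P, ∀ q, A.EpsStep p q → q ∈ P

def subsetStep (A : VA σ V Q) (P : Set Q) (l : VLabel σ V) : Set Q :=
  A.epsClosure {q | ∃ p ∈ P, (p, l, q) ∈ A.delta}

def subsetReach (A : VA σ V Q) (P : Set Q) (L : List (VLabel σ V)) : Set Q :=
  L.foldl A.subsetStep P

def determinize (A : VA σ V Q) : VAF σ V (Set Q) where
  init := A.epsClosure {A.init}
  finals := {P | A.final ∈ P}
  delta := {t | t.2.1.isEps = false ∧ t.2.2 = A.subsetStep t.1 t.2.1}

theorem determinize_deterministic (A : VA σ V Q) : DeterministicVAF A.determinize :=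
  ⟨fun _ _ h => Bool.noConfusion h.1, fun _ _ _ _ h h' => h.2.trans h'.2.symm⟩

variable {A : VA σ V Q}

theorem subset_epsClosure (S : Set Q) : S ⊆ A.epsClosure S :=
  fun q hq => ⟨q, hq, .refl⟩

theorem isEpsClosed_epsClosure (S : Set Q) : A.IsEpsClosed (A.epsClosure S) :=
  fun _ ⟨p, hp, hpq⟩ _ hq => ⟨p, hp, hpq.tail hq⟩

theorem mem_subsetReach_of_isPath {q r : Q} {trs : List (Tr σ V Q)} (h : IsPath q trs r)
    (hδ : ∀ t ∈ trs, t ∈ A.delta) {P : Set Q} (hP : A.IsEpsClosed P) (hq : q ∈ P) :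
    r ∈ A.subsetReach P (eraseEps (labels trs)) := by
  induction h generalizing P with
  | nil => exact hq
  | @cons q q' r l trs h ih =>
    have hl : (q, l, q') ∈ A.delta := hδ _ List.mem_cons_self
    have hδ' : ∀ t ∈ trs, t ∈ A.delta := fun t ht => hδ t (List.mem_cons_of_mem _ ht)
    cases l
    case eps => exact ih hδ' hP (hP q hq q' hl)
    all_goals
      exact ih hδ' (isEpsClosed_epsClosure _) (subset_epsClosure _ ⟨q, hq, hl⟩)

theorem exists_isPath_of_epsStep {q r : Q} (h : Relation.ReflTransGen A.EpsStep q r) :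
    ∃ trs : List (Tr σ V Q), IsPath q trs r ∧ (∀ t ∈ trs, t ∈ A.delta) ∧
      eraseEps (labels trs) = [] := by
  induction h using Relation.ReflTransGen.head_induction_on with
  | refl => exact ⟨[], .nil _, by simp, rfl⟩
  | head hstep _ ih =>
    obtain ⟨trs, hpath, hδ, hL⟩ := ih
    refine ⟨(_, .eps, _) :: trs, .cons hpath, ?_, hL⟩
    intro t ht
    rcases List.mem_cons.1 ht with rfl | ht
    exacts [hstep, hδ t ht]

theorem exists_isPath_of_mem_subsetReach {S : Set Q} {L : List (VLabel σ V)} {r : Q}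
    (hr : r ∈ A.subsetReach (A.epsClosure S) L) :
    ∃ q ∈ S, ∃ trs : List (Tr σ V Q), IsPath q trs r ∧ (∀ t ∈ trs, t ∈ A.delta) ∧
      eraseEps (labels trs) = eraseEps L := by
  induction L generalizing S with
  | nil =>
    obtain ⟨q, hq, hqr⟩ := hr
    exact ⟨q, hq, exists_isPath_of_epsStep hqr⟩
  | cons l L ih =>
    obtain ⟨q', ⟨p, ⟨q, hq, hqp⟩, hl⟩, trs', hpath', hδ', hL'⟩ := ih hr
    obtain ⟨trs, hpath, hδ, hL⟩ := exists_isPath_of_epsStep hqp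
    refine ⟨q, hq, trs ++ (p, l, q') :: trs', hpath.append (.cons hpath'), ?_, ?_⟩
    · intro t ht
      rcases List.mem_append.1 ht with ht | ht
      · exact hδ t ht
      rcases List.mem_cons.1 ht with rfl | ht
      exacts [hl, hδ' t ht]
    · rw [labels_append, eraseEps_append, hL, List.nil_append, labels, List.map_cons,
        eraseEps_cons, eraseEps_cons, ← labels, hL']

variable (A) in
def detPath : Set Q → List (VLabel σ V) → List (Tr σ V (Set Q))
  | _, [] => []
  | P, l :: L => (P, l, A.subsetStep P l) :: detPath (A.subsetStep P l) L

theorem isPath_detPath (P : Set Q) (L : List (VLabel σ V)) :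
    IsPath P (A.detPath P L) (A.subsetReach P L) := by
  induction L generalizing P with
  | nil => exact .nil P
  | cons l L ih => exact .cons (ih _)

theorem labels_detPath (P : Set Q) (L : List (VLabel σ V)) : labels (A.detPath P L) = L := by
  induction L generalizing P with
  | nil => rfl
  | cons l L ih => exact congrArg (l :: ·) (ih _)

theorem detPath_mem_determinize_delta {L : List (VLabel σ V)} (hL : ∀ l ∈ L, l.isEps = false)
    (P : Set Q) : ∀ t ∈ A.detPath P L, t ∈ A.determinize.delta := by
  induction L generalizing P with
  | nil => simp [detPath]
  | cons l L ih =>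
    intro t ht
    rcases List.mem_cons.1 ht with rfl | ht
    · exact ⟨hL l List.mem_cons_self, rfl⟩
    · exact ih (fun l' hl' => hL l' (List.mem_cons_of_mem _ hl')) _ t ht

theorem eq_subsetReach_of_isPath_determinize {P R : Set Q} {trs : List (Tr σ V (Set Q))}
    (h : IsPath P trs R) (hδ : ∀ t ∈ trs, t ∈ A.determinize.delta) :
    R = A.subsetReach P (labels trs) := by
  induction h with
  | nil => rfl
  | @cons q q' r l trs h ih =>
    have hstep : q' = A.subsetStep q l := (hδ _ List.mem_cons_self).2
    rw [ih fun t ht => hδ t (List.mem_cons_of_mem _ ht), hstep]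
    rfl

variable [DecidableEq σ] [DecidableEq V]

theorem semVA_subset_semVAF_determinize (d : List σ) : semVA A d ⊆ semVAF A.determinize d := by
  rintro _ ⟨trs, ⟨hδ, hchain, hend, rfl, hvalid⟩, rfl⟩
  set L := eraseEps (labels trs)
  have hpath : IsPath A.init trs A.final := isPath_iff.2 ⟨hchain, hend⟩
  have hfinal : A.final ∈ A.subsetReach A.determinize.init L :=
    mem_subsetReach_of_isPath hpath hδ (isEpsClosed_epsClosure _) (subset_epsClosure _ rfl)
  have hdet := isPath_iff.1 (A.isPath_detPath A.determinize.init L)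
  have hvisible : eraseEps (labels (A.detPath A.determinize.init L)) = L := by
    rw [labels_detPath, eraseEps_eraseEps]
  refine ⟨A.detPath A.determinize.init L, ⟨?_, hdet.1, hdet.2 ▸ hfinal, word_congr hvisible,
    (validVars_congr hvisible).2 hvalid⟩, (runMapping_congr hvisible).symm⟩
  exact detPath_mem_determinize_delta (fun _ => isEps_of_mem_eraseEps) _

theorem semVAF_determinize_subset_semVA (d : List σ) : semVAF A.determinize d ⊆ semVA A d := by
  rintro _ ⟨btrs, ⟨hδ, hchain, hend, rfl, hvalid⟩, rfl⟩
  have hreach := eq_subsetReach_of_isPath_determinize (isPath_iff.2 ⟨hchain, rfl⟩) hδ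
  obtain ⟨_, rfl, trs, hpath, hδA, hvisible⟩ :=
    exists_isPath_of_mem_subsetReach (hreach ▸ hend : A.final ∈ _)
  exact ⟨trs, ⟨hδA, (isPath_iff.1 hpath).1, (isPath_iff.1 hpath).2, word_congr hvisible,
    (validVars_congr hvisible).2 hvalid⟩, (runMapping_congr hvisible).symm⟩

end VA

/-- For every VA `A` there exists a deterministic VA `A^det` — obtained by the subset
construction, so with state space `2^Q` — such that `⟦A⟧_d = ⟦A^det⟧_d` for every
document `d`. -/
theorem va_determinization {σ V Q : Type} [DecidableEq σ] [DecidableEq V]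
    (A : VA σ V Q) :
    ∃ B : VAF σ V (Set Q), DeterministicVAF B ∧
      ∀ d : List σ, semVA A d = semVAF B d :=
  ⟨A.determinize, A.determinize_deterministic, fun d =>
    (A.semVA_subset_semVAF_determinize d).antisymm (A.semVAF_determinize_subset_semVA d)⟩
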